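/- Dual feasibility is preserved by the primal-dual step: if (y,z) is dual-feasible, δ₁ = min over slack constraints (i,j) ∈ S(y_i) of d_ij - (y_i - z_j) > 0, and we set y'_i = y_i + δ₁ and z'_j = z_j + δ₁ for all j with y_i - z_j = d_ij, then (y', z') still satisfies y'_i - z'_j ≤ d_ij for all j ∈ C. -/
import Mathlib

/-- Dual feasibility is preserved by the primal-dual step. -/
theorem dual_feasibility_preserved {P C : Type*} [Fintype P] [Fintype C]
    [DecidableEq C]
    (d : P → C → ℝ) (y : P → ℝ) (z : C → ℝ) (i : P)
    (hy : ∀ k, 0 ≤ y k) (hz : ∀ j, 0 ≤ z j)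
    (hdual : ∀ k : P, ∀ j : C, y k - z j ≤ d k j)
    (hS : (Finset.univ.filter (fun j : C => y i - z j < d i j)).Nonempty)
    (δ₁ : ℝ)
    (hδ₁ : δ₁ = (Finset.univ.filter (fun j : C => y i - z j < d i j)).inf' hS
      (fun j => d i j - (y i - z j)))
    (y'i : ℝ) (hy'i : y'i = y i + δ₁)
    (z' : C → ℝ)
    (hz' : ∀ j, z' j = if y i - z j = d i j then z j + δ₁ else z j) :
    ∀ j : C, y'i - z' j ≤ d i j := by
  intro j
  rw [hy'i, hz' j]
  by_cases h : y i - z j = d i j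
  · simp [h]
  · simp [h]
    have hmem : j ∈ Finset.univ.filter (fun j : C => y i - z j < d i j) := by
      simp
      exact lt_of_le_of_ne (hdual i j) h
    have := Finset.inf'_le (fun j => d i j - (y i - z j)) hmem
    rw [← hδ₁] at this
    linarith
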